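/- (Tomographic reconstruction from Pauli eigenstates, underlying the linear-inversion Choi estimator.) For every k ≥ 1 and every 2^k×2^k complex matrix ρ, ρ = (1/3^k) ∑_{y ∈ S₆^k} tr(ρ |y⟩⟨y|) · ⊗_{j=1}^{k} ( 3|y_j⟩⟨y_j| − 1₂ ), where |y⟩ = |y₁⟩⊗⋯⊗|y_k⟩. -/

import Mathlib

open scoped BigOperators

/-- The six single-qubit Pauli eigenstates `|0⟩, |1⟩, |±⟩, |±i⟩`. -/
noncomputable def s6 : Fin 6 → Fin 2 → ℂ
  | 0 => ![1, 0]
  | 1 => ![0, 1]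
  | 2 => ![1 / (Real.sqrt 2 : ℂ), 1 / (Real.sqrt 2 : ℂ)]
  | 3 => ![1 / (Real.sqrt 2 : ℂ), -(1 / (Real.sqrt 2 : ℂ))]
  | 4 => ![1 / (Real.sqrt 2 : ℂ), Complex.I / (Real.sqrt 2 : ℂ)]
  | 5 => ![1 / (Real.sqrt 2 : ℂ), -(Complex.I / (Real.sqrt 2 : ℂ))]

/-- Rank-one projector `|v⟩⟨v|` onto a single-qubit vector `v`. -/
noncomputable def proj1 (v : Fin 2 → ℂ) : Matrix (Fin 2) (Fin 2) ℂ :=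
  Matrix.vecMulVec v (star v)

/-- The `k`-qubit product state `|y⟩ = |y₁⟩ ⊗ ⋯ ⊗ |y_k⟩` of Pauli eigenstates. -/
noncomputable def qState {k : ℕ} (y : Fin k → Fin 6) : (Fin k → Fin 2) → ℂ :=
  fun x => ∏ j, s6 (y j) (x j)

/-- The tensor product `⊗_{j=1}^k (3|y_j⟩⟨y_j| − 1₂)` of dual-frame operators. -/
noncomputable def dualFrame {k : ℕ} (y : Fin k → Fin 6) :
    Matrix (Fin k → Fin 2) (Fin k → Fin 2) ℂ :=
  Matrix.of fun u v => ∏ j, ((3 : ℂ) • proj1 (s6 (y j)) - 1) (u j) (v j)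

open Matrix

/-!
Measuring `ρ` in a product of the six Pauli eigenbases and weighting the outcome `y` by
`⊗ⱼ (3 Pⱼ − 1)` is linear in `ρ`, so it suffices to check the reconstruction on the matrix units.
In that kernel form the condition is multiplicative over tensor factors: the sum over
`y ∈ S₆^k` of a product over sites is the product over sites of single-qubit sums, so the
`k`-qubit identity with factor `3^k` follows from the single-qubit one with factor `3`.
For one qubit, the six projectors `P_c` satisfy `∑ P_c = 3` and `∑ P_c ⊗ P_c = 1 + SWAP`
(they form a projective 2-design), whence `∑ tr(ρ P_c) (3 P_c − 1) = 3 (tr ρ + ρ) − 3 tr ρ = 3 ρ`.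
-/

namespace Matrix

def piKronecker {R ι m : Type*} [CommMonoid R] [Fintype ι] (A : ι → Matrix m m R) :
    Matrix (ι → m) (ι → m) R :=
  of fun u v => ∏ j, A j (u j) (v j)

theorem piKronecker_apply {R ι m : Type*} [CommMonoid R] [Fintype ι] (A : ι → Matrix m m R)
    (u v : ι → m) : piKronecker A u v = ∏ j, A j (u j) (v j) :=
  rfl

end Matrix

section DualFrame

variable {R Y m : Type*} [CommSemiring R] [Fintype Y] [Fintype m] [DecidableEq m]

def IsDualFrame (P E : Y → Matrix m m R) (μ : R) : Prop :=
  ∀ ρ : Matrix m m R, ∑ y, (ρ * P y).trace • E y = μ • ρ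

theorem isDualFrame_iff_sum_apply_mul_apply {P E : Y → Matrix m m R} {μ : R} :
    IsDualFrame P E μ ↔
      ∀ u v a b, ∑ y, P y v u * E y a b = if u = a ∧ v = b then μ else 0 := by
  constructor
  · intro h u v a b
    simpa [trace_single_mul, Matrix.sum_apply, single_apply] using
      congr_fun₂ (h (single u v 1)) a b
  · intro h ρ
    ext a b
    calc (∑ y, (ρ * P y).trace • E y) a b
        = ∑ u, ∑ v, ρ u v * ∑ y, P y v u * E y a b := by
          simp only [Matrix.sum_apply, Matrix.smul_apply, smul_eq_mul, trace, diag, mul_apply,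
            Finset.sum_mul, Finset.mul_sum, mul_assoc]
          rw [Finset.sum_comm]
          exact Finset.sum_congr rfl fun u _ => Finset.sum_comm
      _ = (μ • ρ) a b := by simp [h, ite_and, mul_comm]

theorem IsDualFrame.piKronecker {ι : Type*} [Fintype ι] [DecidableEq ι]
    {P E : Y → Matrix m m R} {μ : R} (h : IsDualFrame P E μ) :
    IsDualFrame (fun y : ι → Y => piKronecker fun j => P (y j))
      (fun y => piKronecker fun j => E (y j)) (μ ^ Fintype.card ι) := by
  rw [isDualFrame_iff_sum_apply_mul_apply] at h ⊢
  intro u v a b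
  calc ∑ y : ι → Y,
        (Matrix.piKronecker fun j => P (y j)) v u * (Matrix.piKronecker fun j => E (y j)) a b
      = ∏ j, ∑ c, P c (v j) (u j) * E c (a j) (b j) := by
        simp only [Matrix.piKronecker_apply, ← Finset.prod_mul_distrib, Fintype.prod_sum]
    _ = if u = a ∧ v = b then μ ^ Fintype.card ι else 0 := by
        simp only [h, Fintype.prod_ite_zero, Finset.prod_const, Finset.card_univ, funext_iff,
          forall_and]

end DualFrame

theorem proj1_s6 (c : Fin 6) :
    proj1 (s6 c) = ![!![1, 0; 0, 0], !![0, 0; 0, 1], !![1 / 2, 1 / 2; 1 / 2, 1 / 2],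
      !![1 / 2, -1 / 2; -1 / 2, 1 / 2], !![1 / 2, -Complex.I / 2; Complex.I / 2, 1 / 2],
      !![1 / 2, Complex.I / 2; -Complex.I / 2, 1 / 2]] c := by
  have hsqrt : ((√2 : ℝ) : ℂ) ^ 2 = 2 := by norm_cast; simp
  ext i j
  fin_cases c <;> fin_cases i <;> fin_cases j <;>
    simp [s6, proj1, vecMulVec_apply, div_eq_mul_inv] <;> ring_nf <;> simp [hsqrt] <;> ring

theorem sum_proj1_s6 : ∑ c, proj1 (s6 c) = 3 := by
  ext i j
  fin_cases i <;> fin_cases j <;> simp [Fin.sum_univ_six, proj1_s6, ofNat_apply] <;> ring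

theorem sum_proj1_s6_apply_mul_apply (u v a b : Fin 2) :
    ∑ c, proj1 (s6 c) v u * proj1 (s6 c) a b =
      (if v = u ∧ a = b then 1 else 0) + (if u = a ∧ v = b then 1 else 0) := by
  fin_cases u <;> fin_cases v <;> fin_cases a <;> fin_cases b <;>
    simp [Fin.sum_univ_six, proj1_s6] <;> ring_nf <;> simp [Complex.I_sq] <;> norm_num

theorem isDualFrame_pauliEigenstates :
    IsDualFrame (fun c => proj1 (s6 c)) (fun c => (3 : ℂ) • proj1 (s6 c) - 1) 3 := by
  rw [isDualFrame_iff_sum_apply_mul_apply]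
  intro u v a b
  calc ∑ c, proj1 (s6 c) v u * ((3 : ℂ) • proj1 (s6 c) - 1) a b
      = 3 * ∑ c, proj1 (s6 c) v u * proj1 (s6 c) a b
          - (∑ c, proj1 (s6 c)) v u * (1 : Matrix (Fin 2) (Fin 2) ℂ) a b := by
        simp only [Matrix.sub_apply, Matrix.smul_apply, smul_eq_mul, mul_sub,
          Finset.sum_sub_distrib, Finset.mul_sum, Matrix.sum_apply, Finset.sum_mul, mul_left_comm]
    _ = if u = a ∧ v = b then 3 else 0 := by
        rw [sum_proj1_s6_apply_mul_apply, sum_proj1_s6]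
        simp only [ofNat_apply, one_apply]
        split_ifs <;> grind

theorem dualFrame_eq_piKronecker {k : ℕ} (y : Fin k → Fin 6) :
    dualFrame y = piKronecker fun j => (3 : ℂ) • proj1 (s6 (y j)) - 1 :=
  rfl

theorem vecMulVec_qState {k : ℕ} (y : Fin k → Fin 6) :
    vecMulVec (qState y) (star (qState y)) = piKronecker fun j => proj1 (s6 (y j)) := by
  ext u v
  simp [qState, proj1, vecMulVec_apply, piKronecker_apply, Finset.prod_mul_distrib]

theorem pauli_eigenstates_tomographic_reconstruction_general (k : ℕ)
    (ρ : Matrix (Fin k → Fin 2) (Fin k → Fin 2) ℂ) :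
    ρ = (1 / (3 : ℂ) ^ k) •
        ∑ y : Fin k → Fin 6,
          (ρ * Matrix.vecMulVec (qState y) (star (qState y))).trace • dualFrame y := by
  have h : ∑ y : Fin k → Fin 6,
      (ρ * vecMulVec (qState y) (star (qState y))).trace • dualFrame y = (3 : ℂ) ^ k • ρ := by
    simpa only [vecMulVec_qState, dualFrame_eq_piKronecker, Fintype.card_fin] using
      isDualFrame_pauliEigenstates.piKronecker (ι := Fin k) ρ
  rw [h, smul_smul, one_div, inv_mul_cancel₀ (by norm_num), one_smul]

/-- tomographic reconstruction from Pauli eigenstates: for every `k ≥ 1`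
and every `2^k × 2^k` matrix `ρ`,
`ρ = (1/3^k) ∑_{y ∈ S₆^k} tr(ρ|y⟩⟨y|) ⊗_j (3|y_j⟩⟨y_j| − 1₂)`. -/
theorem pauli_eigenstates_tomographic_reconstruction (k : ℕ) (hk : 1 ≤ k)
    (ρ : Matrix (Fin k → Fin 2) (Fin k → Fin 2) ℂ) :
    ρ = (1 / (3 : ℂ) ^ k) •
        ∑ y : Fin k → Fin 6,
          (ρ * Matrix.vecMulVec (qState y) (star (qState y))).trace • dualFrame y :=
  pauli_eigenstates_tomographic_reconstruction_general k ρ
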